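/- arXiv:1912.03994 — 3 statements merged into one kernel-verified Lean document; each statement's English description precedes it below -/
import Mathlib

section
/- Both 𝒫_∞ and ℬ are Gδ subsets of 𝒫. -/
/-!
Both sets are countable intersections of (unions of) the sets `l1LowerEstimate v` of seminorms
under which `v₁, …, vₙ` satisfy a lower `ℓ¹`-estimate, so it suffices that these are open.
By homogeneity the estimate only has to hold on the rational `ℓ¹`-unit sphere, which is totally
bounded, and `a ↦ μ (∑ aᵢ vᵢ)` is Lipschitz with constant `∑ μ vᵢ`. Hence a seminorm close to `μ₀`
at the `vᵢ` and at the finitely many points of a fine net of the sphere still satisfies the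
estimate, with half the constant.
-/

open Filter Topology

noncomputable section

/-- `V` is the ℚ-vector space of finitely supported sequences of rational numbers. -/
abbrev V : Type := ℕ →₀ ℚ

/-- The canonical basis vectors of `V`. -/
def eV (n : ℕ) : V := Finsupp.single n 1

/-- A ℚ-seminorm (pseudonorm) on `V`. -/
def IsQSeminorm (μ : V → ℝ) : Prop :=
  (∀ (q : ℚ) (v : V), μ (q • v) = |(q : ℝ)| * μ v) ∧
    ∀ v w : V, μ (v + w) ≤ μ v + μ w

/-- The Polish space `𝒫` of pseudonorms on `V`, topologized as a subspace of `ℝ^V`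
(pointwise convergence). -/
abbrev SpaceP : Type := {μ : V → ℝ // IsQSeminorm μ}

/-- `𝒫_∞`: pseudonorms inducing an infinite-dimensional Banach space. -/
def SetPinf : Set SpaceP :=
  {μ | ∀ n : ℕ, ∃ v : Fin n → V, ∃ c : ℝ, 0 < c ∧
    ∀ a : Fin n → ℚ, c * (∑ i, |(a i : ℝ)|) ≤ μ.1 (∑ i, a i • v i)}

/-- `ℬ`: pseudonorms for which the canonical basis vectors stay linearly independent
in the induced Banach space. -/
def SetB : Set SpaceP :=
  {μ | ∀ n : ℕ, ∃ c : ℝ, 0 < c ∧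
    ∀ a : Fin n → ℚ, c * (∑ i, |(a i : ℝ)|) ≤ μ.1 (∑ i, a i • eV i)}

/-- `μ ∈ 𝒫` represents the Banach space `X` isometrically: the Banach space `X_μ`
induced by `μ` is linearly isometric to `X`. -/
def RepIsometric (X : Type*) [NormedAddCommGroup X] [NormedSpace ℝ X] (μ : SpaceP) : Prop :=
  ∃ T : V → X,
    (∀ v w : V, T (v + w) = T v + T w) ∧
    (∀ (q : ℚ) (v : V), T (q • v) = (q : ℝ) • T v) ∧
    (∀ v : V, ‖T v‖ = μ.1 v) ∧
    Dense (Submodule.span ℝ (Set.range T) : Set X)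

def IsQSeminorm.toSeminorm {μ : V → ℝ} (h : IsQSeminorm μ) : Seminorm ℚ V :=
  Seminorm.of μ h.2 fun q v => by rw [h.1, ← Rat.norm_cast_real, Real.norm_eq_abs]

@[simp]
lemma IsQSeminorm.coe_toSeminorm {μ : V → ℝ} (h : IsQSeminorm μ) : ⇑h.toSeminorm = μ := rfl

lemma IsQSeminorm.nonneg {μ : V → ℝ} (h : IsQSeminorm μ) (v : V) : 0 ≤ μ v :=
  apply_nonneg h.toSeminorm v

namespace Seminorm

variable {𝕜 E ι : Type*} [AddCommGroup E] [Fintype ι]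

lemma abs_sub_le_norm_sub_mul_sum [NormedField 𝕜] [Module 𝕜 E] (p : Seminorm 𝕜 E)
    (a b : ι → 𝕜) (v : ι → E) :
    |p (∑ i, a i • v i) - p (∑ i, b i • v i)| ≤ ‖a - b‖ * ∑ i, p (v i) :=
  calc |p (∑ i, a i • v i) - p (∑ i, b i • v i)|
      ≤ p (∑ i, (a i - b i) • v i) := by
        simpa only [sub_smul, Finset.sum_sub_distrib] using abs_sub_map_le_sub p _ _
    _ ≤ ∑ i, p ((a i - b i) • v i) :=
        Finset.le_sum_of_subadditive p (map_zero p).le (map_add_le_add p) _ _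
    _ = ∑ i, ‖(a - b) i‖ * p (v i) := by simp only [map_smul_eq_mul, Pi.sub_apply]
    _ ≤ ‖a - b‖ * ∑ i, p (v i) := by
        rw [Finset.mul_sum]
        gcongr with i
        exact norm_le_pi_norm _ i

lemma mul_sum_abs_le_of_forall_sum_abs_eq_one [Module ℚ E] (p : Seminorm ℚ E) (v : ι → E)
    {c : ℝ} (h : ∀ a : ι → ℚ, ∑ i, |a i| = 1 → c ≤ p (∑ i, a i • v i)) (a : ι → ℚ) :
    c * ∑ i, |(a i : ℝ)| ≤ p (∑ i, a i • v i) := by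
  have hs_cast : ∑ i, |(a i : ℝ)| = ((∑ i, |a i| : ℚ) : ℝ) := by push_cast; rfl
  generalize hs : ∑ i, |a i| = s at hs_cast
  rw [hs_cast]
  rcases (hs ▸ Finset.sum_nonneg fun i _ => abs_nonneg (a i) : 0 ≤ s).eq_or_lt with hs0 | hs0
  · rw [← hs0, Rat.cast_zero, mul_zero]
    exact apply_nonneg p _
  · have h_unit : ∑ i, |s⁻¹ * a i| = 1 := by
      simp only [abs_mul, abs_inv, abs_of_pos hs0, ← Finset.mul_sum, hs, inv_mul_cancel₀ hs0.ne']
    have h_scale : ∑ i, a i • v i = s • ∑ i, (s⁻¹ * a i) • v i := by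
      simp only [Finset.smul_sum, smul_smul, mul_inv_cancel_left₀ hs0.ne']
    rw [h_scale, map_smul_eq_mul, ← Rat.norm_cast_real, Real.norm_eq_abs,
      abs_of_pos (by exact_mod_cast hs0), mul_comm]
    exact mul_le_mul_of_nonneg_left (h _ h_unit) (by exact_mod_cast hs0.le)

end Seminorm

lemma totallyBounded_sum_abs_eq_one (ι : Type*) [Fintype ι] :
    TotallyBounded {a : ι → ℚ | ∑ i, |a i| = 1} := by
  have h_cast : Isometry (Pi.map fun _ : ι => ((↑) : ℚ → ℝ)) :=
    .piMap _ fun _ => .of_dist_eq Rat.dist_cast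
  refine (totallyBounded_preimage h_cast.isUniformInducing
    (isCompact_closedBall (0 : ι → ℝ) 1).totallyBounded).subset fun a ha => ?_
  simp only [Set.mem_preimage, mem_closedBall_zero_iff]
  refine (pi_norm_le_iff_of_nonneg zero_le_one).2 fun i => ?_
  have h_le : |a i| ≤ 1 :=
    ha ▸ Finset.single_le_sum (f := fun i => |a i|) (fun j _ => abs_nonneg _) (Finset.mem_univ i)
  rw [Pi.map_apply, Real.norm_eq_abs, ← Rat.cast_abs]
  exact_mod_cast h_le

lemma SpaceP.continuous_eval (x : V) : Continuous fun μ : SpaceP => μ.1 x :=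
  (continuous_apply x).comp continuous_subtype_val

def l1LowerEstimate {ι : Type*} [Fintype ι] (v : ι → V) : Set SpaceP :=
  {μ | ∃ c : ℝ, 0 < c ∧ ∀ a : ι → ℚ, c * (∑ i, |(a i : ℝ)|) ≤ μ.1 (∑ i, a i • v i)}

lemma isOpen_l1LowerEstimate {ι : Type*} [Fintype ι] (v : ι → V) :
    IsOpen (l1LowerEstimate v) := by
  refine isOpen_iff_eventually.2 fun μ₀ ⟨c, hc, hμ₀⟩ => ?_
  -- `K` bounds `∑ i, μ (v i)` near `μ₀`, hence the Lipschitz constant of `a ↦ μ (∑ i, a i • v i)`.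
  set K : ℝ := ∑ i, μ₀.1 (v i) + Fintype.card ι + 1
  have hK : 0 < K := by
    have := Finset.sum_nonneg fun i (_ : i ∈ Finset.univ) => μ₀.2.nonneg (v i)
    positivity
  obtain ⟨t, ht_sphere, ht_finite, ht_cover⟩ := Metric.finite_approx_of_totallyBounded
    (totallyBounded_sum_abs_eq_one ι) (c / (4 * K)) (by positivity)
  have h_near_v : ∀ᶠ μ in 𝓝 μ₀, ∀ i, μ.1 (v i) < μ₀.1 (v i) + 1 :=
    eventually_all.2 fun i =>
      (SpaceP.continuous_eval _).continuousAt.eventually_lt continuousAt_const (lt_add_one _)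
  have h_near_net : ∀ᶠ μ in 𝓝 μ₀, ∀ b ∈ t, μ₀.1 (∑ i, b i • v i) - c / 4 < μ.1 (∑ i, b i • v i) :=
    (eventually_all_finite ht_finite).2 fun b _ =>
      continuousAt_const.eventually_lt (SpaceP.continuous_eval _).continuousAt (sub_lt_self _ (by positivity))
  filter_upwards [h_near_v, h_near_net] with μ h_near_v h_near_net
  refine ⟨c / 2, by positivity,
    μ.2.toSeminorm.mul_sum_abs_le_of_forall_sum_abs_eq_one v fun a ha => ?_⟩
  obtain ⟨b, hb, hab⟩ := Set.mem_iUnion₂.1 (ht_cover ha)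
  have hb_unit : ∑ i, |(b i : ℝ)| = 1 := by exact_mod_cast ht_sphere hb
  have h_sum : ∑ i, μ.1 (v i) ≤ K :=
    calc ∑ i, μ.1 (v i) ≤ ∑ i, (μ₀.1 (v i) + 1) := Finset.sum_le_sum fun i _ => (h_near_v i).le
      _ ≤ K := by simp [K, Finset.sum_add_distrib]
  have h_lip : ‖a - b‖ * ∑ i, μ.1 (v i) ≤ c / 4 :=
    calc ‖a - b‖ * ∑ i, μ.1 (v i) ≤ c / (4 * K) * K := by
          gcongr
          · exact Finset.sum_nonneg fun i _ => μ.2.nonneg (v i)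
          · exact (dist_eq_norm a b ▸ Metric.mem_ball.1 hab).le
      _ = c / 4 := by field_simp
  have h_ab := (abs_le.1 (μ.2.toSeminorm.abs_sub_le_norm_sub_mul_sum a b v)).1
  have h_b : c ≤ μ₀.1 (∑ i, b i • v i) := by simpa [hb_unit] using hμ₀ b
  simp only [IsQSeminorm.coe_toSeminorm] at h_ab ⊢
  linarith [h_near_net b hb]

/-- Both `𝒫_∞` and `ℬ` are Gδ subsets of `𝒫`. -/
theorem statement1 : IsGδ SetPinf ∧ IsGδ SetB := by
  have hPinf : SetPinf = ⋂ n : ℕ, ⋃ v : Fin n → V, l1LowerEstimate v := by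
    ext μ; simp [SetPinf, l1LowerEstimate]
  have hB : SetB = ⋂ n : ℕ, l1LowerEstimate fun i : Fin n => eV i := by
    ext μ; simp [SetB, l1LowerEstimate]
  rw [hPinf, hB]
  exact ⟨.iInter fun n => (isOpen_iUnion isOpen_l1LowerEstimate).isGδ,
    .iInter fun n => (isOpen_l1LowerEstimate _).isGδ⟩
end
end

section
/- Let X be a separable infinite-dimensional real Banach space. Then the set {ν ∈ ℬ : X_ν is finitely representable in X} equals the closure, in the topological space ℬ, of the isometry class of X in ℬ. The same holds with ℬ replaced throughout by 𝒫_∞ or by 𝒫. -/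
/-
Everything happens in `𝒫`: closures in `ℬ` and `𝒫_∞` are traces of closures in `𝒫`, and the
approximants constructed in the first argument below already lie in `ℬ`.

If `X_ν` is finitely representable in `X`, fix finitely many vectors supported on the first `m`
coordinates and take witnesses `x₀, …, x_{m-1}` of finite representability for `e₀, …, e_{m-1}`.
Perturb them and continue them to a linearly independent sequence `z` with dense range in `X`;
then `v ↦ ‖∑ vᵢ zᵢ‖` represents `X`, lies in `ℬ` by independence, and is close to `ν` at the
given vectors.

Conversely, let `ν` be a pointwise limit of pseudonorms `μ` represented by maps `T` into `X`, and
fix `v₁, …, vₙ`. The coefficient seminorm `b ↦ ν (∑ bᵢ vᵢ)` on `ℚⁿ` is Lipschitz, so it extends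
to a seminorm `g` on `ℝⁿ`. Closeness of `μ` and `ν` at finitely many rational points makes
`a ↦ ‖∑ aᵢ T vᵢ‖` uniformly close to `g` on the unit sphere; projecting along the null space of
`g`, on whose complement `g` dominates a multiple of the norm, turns this additive error into a
multiplicative one.
-/

open Filter Topology

noncomputable section

/-- The Banach space `X_μ` induced by `μ ∈ 𝒫` is finitely representable in `X`. -/
def FinRepInX (X : Type*) [NormedAddCommGroup X] [NormedSpace ℝ X] (μ : SpaceP) : Prop :=
  ∀ ε : ℝ, 0 < ε → ∀ (n : ℕ) (v : Fin n → V), ∃ x : Fin n → X,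
    ∀ a : Fin n → ℚ,
      (1 + ε)⁻¹ * μ.1 (∑ i, a i • v i) ≤ ‖∑ i, (a i : ℝ) • x i‖ ∧
        ‖∑ i, (a i : ℝ) • x i‖ ≤ (1 + ε) * μ.1 (∑ i, a i • v i)

namespace SpaceP

def toSeminorm (μ : SpaceP) : Seminorm ℚ V :=
  Seminorm.of μ.1 μ.2.2 fun q v => by rw [μ.2.1, ← Rat.norm_cast_real, Real.norm_eq_abs]

@[simp] lemma toSeminorm_apply (μ : SpaceP) (v : V) : μ.toSeminorm v = μ.1 v := rfl

lemma nonneg (μ : SpaceP) (v : V) : 0 ≤ μ.1 v := apply_nonneg μ.toSeminorm v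

lemma abs_sub_le (μ : SpaceP) (v w : V) : |μ.1 v - μ.1 w| ≤ μ.1 (v - w) :=
  μ.toSeminorm.norm_sub_map_le_sub v w

lemma le_sum_smul {ι : Type*} (μ : SpaceP) (s : Finset ι) (a : ι → ℚ) (v : ι → V) :
    μ.1 (∑ i ∈ s, a i • v i) ≤ ∑ i ∈ s, |(a i : ℝ)| * μ.1 (v i) := by
  refine (Finset.le_sum_of_subadditive μ.toSeminorm (map_zero _).le (map_add_le_add _) s _).trans_eq
    ?_
  simp [μ.2.1]

lemma mem_closure_iff {S : Set SpaceP} {ν : SpaceP} :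
    ν ∈ closure S ↔ ∀ (I : Set V) (r : V → ℝ), I.Finite → (∀ v ∈ I, 0 < r v) →
      ∃ μ ∈ S, ∀ v ∈ I, |μ.1 v - ν.1 v| < r v := by
  have hbasis := (nhds_pi (a := ν.1)).symm ▸
    Filter.hasBasis_pi fun v => Metric.nhds_basis_ball (x := ν.1 v)
  rw [closure_subtype, mem_closure_iff_nhds_basis hbasis]
  simp [Real.dist_eq, and_imp, Prod.forall]

lemma exists_seminorm_extension (ν : SpaceP) {ι : Type*} [Fintype ι] (v : ι → V) :
    ∃ g : Seminorm ℝ (ι → ℝ), ∀ b : ι → ℚ, g (fun i => (b i : ℝ)) = ν.1 (∑ i, b i • v i) := by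
  set e : (ι → ℚ) → (ι → ℝ) := fun b i => (b i : ℝ)
  have he : DenseRange e := DenseRange.piMap fun _ => Rat.denseRange_cast
  have he_inj : e.Injective := fun b b' h => funext fun i => Rat.cast_injective (congrFun h i)
  set f : (ι → ℚ) → ℝ := fun b => ν.1 (∑ i, b i • v i)
  set L := ∑ i, ν.1 (v i)
  have hlip : LipschitzOnWith L.toNNReal (Function.extend e f 0) (Set.range e) := by
    refine LipschitzOnWith.of_dist_le_mul ?_
    rintro _ ⟨b, rfl⟩ _ ⟨b', rfl⟩
    rw [he_inj.extend_apply, he_inj.extend_apply, Real.dist_eq,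
      Real.coe_toNNReal _ (Finset.sum_nonneg fun i _ => ν.nonneg _), Finset.sum_mul]
    refine (ν.abs_sub_le _ _).trans ?_
    rw [← Finset.sum_sub_distrib]
    simp_rw [← sub_smul]
    refine (ν.le_sum_smul _ _ _).trans (Finset.sum_le_sum fun i _ => ?_)
    rw [mul_comm]
    gcongr
    · exact ν.nonneg _
    · simpa [e, Real.dist_eq] using dist_le_pi_dist (e b) (e b') i
  obtain ⟨G, hGlip, hGeq⟩ := hlip.extend_real
  have hG : ∀ b, G (e b) = f b := fun b => by rw [← hGeq ⟨b, rfl⟩, he_inj.extend_apply]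
  refine ⟨Seminorm.of G (isClosed_property2 he ?_ fun b b' => ?_) fun t x => ?_, hG⟩
  · exact isClosed_le (hGlip.continuous.comp (continuous_fst.add continuous_snd))
      ((hGlip.continuous.comp continuous_fst).add (hGlip.continuous.comp continuous_snd))
  · have : e b + e b' = e (b + b') := by ext; simp [e]
    rw [this, hG, hG, hG]
    simpa [f, add_smul, Finset.sum_add_distrib] using ν.2.2 (∑ i, b i • v i) (∑ i, b' i • v i)
  · refine isClosed_property (e := Prod.map ((↑) : ℚ → ℝ) e) (Rat.denseRange_cast.prodMap he)
      (p := fun q : ℝ × (ι → ℝ) => G (q.1 • q.2) = ‖q.1‖ * G q.2) ?_ (fun ⟨q, b⟩ => ?_) (t, x)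
    · exact isClosed_eq (hGlip.continuous.comp (continuous_fst.smul continuous_snd))
        (continuous_fst.norm.mul (hGlip.continuous.comp continuous_snd))
    · have : (q : ℝ) • e b = e (q • b) := by ext; simp [e]
      simp only [Prod.map, this, hG, f, Real.norm_eq_abs]
      rw [← ν.2.1]
      simp [Finset.smul_sum, smul_smul]

end SpaceP

namespace Seminorm

variable {ι : Type*} [Fintype ι] [DecidableEq ι]

lemma le_norm_mul_sum_single (p : Seminorm ℝ (ι → ℝ)) (x : ι → ℝ) :
    p x ≤ ‖x‖ * ∑ i, p (Pi.single i 1) := by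
  conv_lhs => rw [pi_eq_sum_univ' x]
  refine (Finset.le_sum_of_subadditive p (map_zero p).le (map_add_le_add p) _ _).trans ?_
  rw [Finset.mul_sum]
  gcongr with i
  rw [map_smul_eq_mul]
  gcongr
  exact norm_le_pi_norm x i

lemma continuous_pi_real (p : Seminorm ℝ (ι → ℝ)) : Continuous p := by
  refine (LipschitzWith.of_dist_le_mul (K := (∑ i, p (Pi.single i 1)).toNNReal)
    fun x y => ?_).continuous
  rw [Real.dist_eq, dist_eq_norm, Real.coe_toNNReal _ (by positivity), mul_comm]
  exact (p.norm_sub_map_le_sub x y).trans (p.le_norm_mul_sum_single _)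

lemma exists_projection_bounded_below {E : Type*} [NormedAddCommGroup E] [NormedSpace ℝ E]
    [FiniteDimensional ℝ E] (g : Seminorm ℝ E) (hg : Continuous g) :
    ∃ P : E →ₗ[ℝ] E, ∃ c > 0, ∀ x, g (P x) = g x ∧ c * ‖P x‖ ≤ g x := by
  let N : Submodule ℝ E :=
    { carrier := {x | g x = 0}
      add_mem' := fun {x y} hx hy =>
        le_antisymm ((map_add_le_add g x y).trans (by simp_all)) (apply_nonneg g _)
      zero_mem' := map_zero g
      smul_mem' := fun t x hx => by simp_all [map_smul_eq_mul] }
  obtain ⟨C, hC⟩ := N.exists_isCompl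
  let P := C.projection N hC.symm
  have hPg : ∀ x, g (P x) = g x := fun x => by
    have hN : x - P x ∈ N := by
      rw [← Submodule.projection_eq_self_sub_projection]; exact Submodule.projection_apply_mem _ _
    have := g.norm_sub_map_le_sub x (P x)
    rw [show g (x - P x) = 0 from hN, Real.norm_eq_abs] at this
    exact (sub_eq_zero.1 (abs_nonpos_iff.1 this)).symm
  have hpos : ∀ x ∈ (C : Set E) ∩ Metric.sphere 0 1, 0 < g x := by
    rintro x ⟨hxC, hx1⟩
    refine (apply_nonneg g x).lt_of_ne fun h => ?_
    have : x = 0 := Submodule.disjoint_def.1 hC.disjoint x h.symm hxC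
    simp [this] at hx1
  obtain ⟨c, hc, hcg⟩ := ((isCompact_sphere 0 1).inter_left
    (Submodule.closed_of_finiteDimensional C)).exists_forall_le' hg.continuousOn hpos
  refine ⟨P, c, hc, fun x => ⟨hPg x, ?_⟩⟩
  rw [← hPg x]
  rcases eq_or_ne (P x) 0 with h0 | h0
  · simp [h0]
  have hunit := hcg (‖P x‖⁻¹ • P x)
    ⟨C.smul_mem _ (Submodule.projection_apply_mem _ _), by simp [norm_smul, h0]⟩
  rwa [map_smul_eq_mul, norm_inv, norm_norm, ← div_eq_inv_mul,
    le_div_iff₀ (norm_pos_iff.2 h0)] at hunit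

lemma abs_sub_le_mul_norm_of_sphere {E : Type*} [NormedAddCommGroup E] [NormedSpace ℝ E]
    (p q : Seminorm ℝ E) {η : ℝ} (h : ∀ u, ‖u‖ = 1 → |p u - q u| ≤ η) (x : E) :
    |p x - q x| ≤ η * ‖x‖ := by
  rcases eq_or_ne x 0 with rfl | hx
  · simp
  have hx' : 0 < ‖x‖ := norm_pos_iff.2 hx
  have hu := h (‖x‖⁻¹ • x) (norm_smul_inv_norm hx)
  rwa [map_smul_eq_mul, map_smul_eq_mul, ← mul_sub, abs_mul, norm_inv, norm_norm, abs_inv,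
    abs_norm, inv_mul_le_iff₀ hx', mul_comm] at hu

lemma exists_finset_rat_forall_abs_sub_le (g : Seminorm ℝ (ι → ℝ)) {η : ℝ} (hη : 0 < η) :
    ∃ F : Finset (ι → ℚ), ∃ δ > 0, ∀ h : Seminorm ℝ (ι → ℝ),
      (∀ b ∈ F, |h (fun i => (b i : ℝ)) - g (fun i => (b i : ℝ))| < δ) →
        ∀ x, |h x - g x| ≤ η * ‖x‖ := by
  set L := ∑ i, g (Pi.single i 1)
  have hL : 0 ≤ L := by positivity
  set n : ℝ := (Fintype.card ι : ℝ)
  set ρ := η / (2 * (2 * L + n + 1))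
  have hρ : 0 < ρ := by positivity
  have hdense : DenseRange fun (b : ι → ℚ) i => (b i : ℝ) :=
    DenseRange.piMap fun _ => Rat.denseRange_cast
  obtain ⟨B, hB⟩ := (isCompact_sphere (0 : ι → ℝ) 1).elim_finite_subcover
    (fun b : ι → ℚ => Metric.ball (fun i => (b i : ℝ)) ρ) (fun _ => Metric.isOpen_ball)
    fun u _ => Set.mem_iUnion.2 <| (hdense.exists_dist_lt u hρ).imp fun _ h => Metric.mem_ball.2 h
  refine ⟨B ∪ Finset.univ.image (fun i => Pi.single i 1), min 1 (η / 2), by positivity,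
    fun h hF => abs_sub_le_mul_norm_of_sphere h g fun u hu => ?_⟩
  have hsingle : ∀ i, (fun j => (((Pi.single i 1 : ι → ℚ) j : ℚ) : ℝ)) = Pi.single i 1 := by
    intro i; ext j; by_cases hj : j = i <;> simp [hj]
  have hhL : ∑ i, h (Pi.single i 1) ≤ L + n := by
    have hi : ∀ i, h (Pi.single i 1) ≤ g (Pi.single i 1) + 1 := fun i => by
      have := hF (Pi.single i 1)
        (Finset.mem_union_right _ (Finset.mem_image_of_mem _ (Finset.mem_univ i)))
      rw [hsingle] at this
      linarith [(abs_lt.1 this).2, min_le_left 1 (η / 2)]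
    exact (Finset.sum_le_sum fun i _ => hi i).trans_eq (by simp [Finset.sum_add_distrib, L, n])
  obtain ⟨b, hbB, hu_ball⟩ := Set.mem_iUnion₂.1 (hB (mem_sphere_zero_iff_norm.2 hu))
  set c : ι → ℝ := fun i => (b i : ℝ)
  have hub : ‖u - c‖ ≤ ρ := (dist_eq_norm u c ▸ Metric.mem_ball.1 hu_ball).le
  have hρη : ρ * (2 * L + n + 1) = η / 2 := by
    have : 2 * L + n + 1 ≠ 0 := by positivity
    simp only [ρ]; field_simp
  have h₁ : |h u - h c| ≤ (L + n) * ρ :=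
    (h.norm_sub_map_le_sub u c).trans <| (h.le_norm_mul_sum_single _).trans <| by
      rw [mul_comm]; gcongr
  have h₂ : |h c - g c| ≤ η / 2 := (hF b (Finset.mem_union_left _ hbB)).le.trans (min_le_right _ _)
  have h₃ : |g c - g u| ≤ L * ρ :=
    (g.norm_sub_map_le_sub c u).trans <| (g.le_norm_mul_sum_single _).trans <| by
      rw [mul_comm, norm_sub_rev]; gcongr
  calc |h u - g u| ≤ |h u - g c| + |g c - g u| := abs_sub_le _ _ _
    _ ≤ |h u - h c| + |h c - g c| + |g c - g u| := by gcongr; exact abs_sub_le _ _ _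
    _ ≤ (L + n) * ρ + η / 2 + L * ρ := by gcongr
    _ ≤ η := by nlinarith

end Seminorm

lemma le_and_le_of_abs_sub_le {s t ε : ℝ} (hε : 0 < ε) (h : |s - t| ≤ ε / (1 + ε) * t) :
    (1 + ε)⁻¹ * t ≤ s ∧ s ≤ (1 + ε) * t := by
  have ht : 0 ≤ t := nonneg_of_mul_nonneg_right ((abs_nonneg _).trans h) (by positivity)
  have hε' : ε / (1 + ε) ≤ ε := div_le_self hε.le (by linarith)
  have hinv : (1 + ε)⁻¹ = 1 - ε / (1 + ε) := by field_simp; ring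
  obtain ⟨h₁, h₂⟩ := abs_le.1 h
  constructor <;> nlinarith

lemma abs_sub_le_mul_of_le_and_le {s t δ : ℝ} (hδ : 0 ≤ δ) (ht : 0 ≤ t)
    (h : (1 + δ)⁻¹ * t ≤ s ∧ s ≤ (1 + δ) * t) : |s - t| ≤ δ * t := by
  have : (1 + δ)⁻¹ * t ≥ (1 - δ) * t := by
    gcongr
    rw [inv_eq_one_div, le_div_iff₀ (by positivity)]
    nlinarith
  rw [abs_le]; constructor <;> nlinarith [h.1, h.2]

lemma map_sum_rat_smul {X : Type*} [AddCommGroup X] [Module ℝ X] {T : V → X}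
    (hadd : ∀ v w, T (v + w) = T v + T w) (hsmul : ∀ (q : ℚ) v, T (q • v) = (q : ℝ) • T v)
    {ι : Type*} (s : Finset ι) (a : ι → ℚ) (v : ι → V) :
    T (∑ i ∈ s, a i • v i) = ∑ i ∈ s, (a i : ℝ) • T (v i) := by
  change AddMonoidHom.mk' T hadd _ = _
  simp [map_sum, hsmul]

theorem finRepInX_of_mem_closure {X : Type*} [NormedAddCommGroup X] [NormedSpace ℝ X]
    {ν : SpaceP} (hν : ν ∈ closure {μ | RepIsometric X μ}) : FinRepInX X ν := by
  intro ε hε n v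
  obtain ⟨g, hg⟩ := ν.exists_seminorm_extension v
  obtain ⟨P, c, hc, hP⟩ := g.exists_projection_bounded_below g.continuous_pi_real
  obtain ⟨F, δ, hδ, hF⟩ := g.exists_finset_rat_forall_abs_sub_le (η := c * (ε / (1 + ε)))
    (by positivity)
  obtain ⟨μ, ⟨T, hadd, hsmul, hnorm, -⟩, hμ⟩ := SpaceP.mem_closure_iff.1 hν
    ((fun b : Fin n → ℚ => ∑ i, b i • v i) '' F) (fun _ => δ) (F.finite_toSet.image _)
    fun _ _ => hδ
  let G : (Fin n → ℝ) →ₗ[ℝ] X := Fintype.linearCombination ℝ fun i => T (v i)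
  have hGT : ∀ b : Fin n → ℚ, G (fun i => (b i : ℝ)) = T (∑ i, b i • v i) := fun b => by
    simp [G, Fintype.linearCombination_apply, map_sum_rat_smul hadd hsmul]
  have happrox := hF ((normSeminorm ℝ X).comp G) fun b hb => by
    simpa [hGT, hnorm, hg] using hμ _ ⟨b, hb, rfl⟩
  refine ⟨fun i => G (P (Pi.single i 1)), fun a => ?_⟩
  have hsum : ∑ i, (a i : ℝ) • G (P (Pi.single i 1)) = G (P fun i => (a i : ℝ)) := by
    simp only [← map_smul, ← map_sum]
    rw [← pi_eq_sum_univ']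
  rw [hsum, ← hg a]
  refine le_and_le_of_abs_sub_le hε ?_
  set x : Fin n → ℝ := fun i => (a i : ℝ)
  calc |‖G (P x)‖ - g x| = |(normSeminorm ℝ X).comp G (P x) - g (P x)| := by rw [(hP x).1]; rfl
    _ ≤ c * (ε / (1 + ε)) * ‖P x‖ := happrox (P x)
    _ ≤ ε / (1 + ε) * g x := by rw [mul_comm c, mul_assoc]; gcongr; exact (hP x).2

section Sequences

variable {X : Type*} [NormedAddCommGroup X] [NormedSpace ℝ X]

lemma exists_dist_lt_notMem_span (hinf : ¬FiniteDimensional ℝ X) {s : Set X} (hs : s.Finite)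
    (x : X) {r : ℝ} (hr : 0 < r) : ∃ y, dist y x < r ∧ y ∉ Submodule.span ℝ s := by
  by_contra! h
  have : Submodule.span ℝ s = ⊤ := Submodule.eq_top_of_nonempty_interior' _
    ⟨x, mem_interior.2 ⟨Metric.ball x r, h, Metric.isOpen_ball, Metric.mem_ball_self hr⟩⟩
  have := FiniteDimensional.span_of_finite ℝ hs
  exact hinf (Module.Finite.equiv ((LinearEquiv.ofEq _ _ ‹_›).trans Submodule.topEquiv))

lemma linearIndependent_of_notMem_span_image_Iio {K M : Type*} [DivisionRing K] [AddCommGroup M]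
    [Module K M] {f : ℕ → M} (hf : ∀ n, f n ∉ Submodule.span K (f '' Set.Iio n)) :
    LinearIndependent K f := by
  have hIio : ∀ n, LinearIndepOn K f (Set.Iio n) := by
    intro n
    induction n with
    | zero => simp
    | succ n ih =>
      rw [← Order.succ_eq_add_one, Order.Iio_succ_eq_insert]
      exact ih.insert (hf n)
  rw [← linearIndepOn_univ_iff, ← Set.iUnion_Iio]
  exact linearIndepOn_iUnion_of_directed (monotone_Iio (α := ℕ)).directed_le hIio

lemma exists_linearIndependent_seq_dist_lt (hinf : ¬FiniteDimensional ℝ X) (t : ℕ → X)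
    {η : ℕ → ℝ} (hη : ∀ n, 0 < η n) :
    ∃ z : ℕ → X, LinearIndependent ℝ z ∧ ∀ n, dist (z n) (t n) < η n := by
  choose pick hpick using fun n (s : Set X) (hs : s.Finite) =>
    exists_dist_lt_notMem_span hinf hs (t n) (hη n)
  let z : ℕ → X := Nat.strongRec fun n prev =>
    pick n (Set.range fun i : Fin n => prev i i.2) (Set.finite_range _)
  have hz : ∀ n, z n = pick n (z '' Set.Iio n) ((Set.finite_Iio n).image z) := fun n => by
    rw [show z n = _ from Nat.strongRec_eq _ n]
    congr
    ext; simp [z, Fin.exists_iff]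
  refine ⟨z, linearIndependent_of_notMem_span_image_Iio fun n => ?_, fun n => ?_⟩ <;> rw [hz n]
  exacts [(hpick ..).2, (hpick ..).1]

lemma exists_linearIndependent_denseRange_dist_lt [TopologicalSpace.SeparableSpace X]
    (hinf : ¬FiniteDimensional ℝ X) {m : ℕ} (x : Fin m → X) {η : ℝ} (hη : 0 < η) :
    ∃ z : ℕ → X, LinearIndependent ℝ z ∧ DenseRange z ∧ ∀ i : Fin m, dist (z i) (x i) < η := by
  obtain ⟨d, hd⟩ := TopologicalSpace.exists_dense_seq X
  -- the term of index `m + Nat.pair j l` approximates `d j` within `1 / (l + 1)`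
  obtain ⟨z, hz_ind, hz⟩ := exists_linearIndependent_seq_dist_lt hinf
    (fun k => if h : k < m then x ⟨k, h⟩ else d (k - m).unpair.1)
    (η := fun k => if k < m then η else 1 / ((k - m).unpair.2 + 1))
    fun k => by split_ifs <;> positivity
  refine ⟨z, hz_ind, Metric.denseRange_iff.2 fun y r hr => ?_, fun i => by simpa using hz i⟩
  obtain ⟨j, hj⟩ := Metric.denseRange_iff.1 hd y (r / 2) (half_pos hr)
  obtain ⟨l, hl⟩ := exists_nat_one_div_lt (half_pos hr)
  have hjl := hz (m + Nat.pair j l)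
  simp only [add_lt_iff_neg_left, Nat.not_lt_zero, dite_false, if_false, add_tsub_cancel_left,
    Nat.unpair_pair] at hjl
  refine ⟨m + Nat.pair j l, ?_⟩
  calc dist y (z _) ≤ dist y (d j) + dist (z _) (d j) := dist_triangle_right _ _ _
    _ < r / 2 + r / 2 := add_lt_add hj (hjl.trans hl)
    _ = r := add_halves r

end Sequences

lemma eq_sum_smul_eV {v : V} {m : ℕ} (hv : v.support ⊆ Finset.range m) :
    v = ∑ i : Fin m, v i • eV i := by
  conv_lhs => rw [← v.sum_single, Finsupp.sum_of_support_subset v hv _ (by simp)]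
  rw [← Fin.sum_univ_eq_sum_range]
  simp [eV]

section SeqSeminorm

variable {X : Type*} [NormedAddCommGroup X] [NormedSpace ℝ X]

def seqMap (z : ℕ → X) (v : V) : X := v.sum fun i q => (q : ℝ) • z i

lemma seqMap_add (z : ℕ → X) (v w : V) : seqMap z (v + w) = seqMap z v + seqMap z w :=
  Finsupp.sum_add_index' (by simp) fun _ _ _ => by push_cast; exact add_smul _ _ _

lemma seqMap_smul (z : ℕ → X) (q : ℚ) (v : V) : seqMap z (q • v) = (q : ℝ) • seqMap z v := by
  rw [seqMap, seqMap, Finsupp.sum_smul_index' (by simp), Finsupp.smul_sum]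
  simp [mul_smul]

lemma seqMap_sum_smul_eV (z : ℕ → X) {n : ℕ} (a : Fin n → ℚ) :
    seqMap z (∑ i, a i • eV i) = ∑ i, (a i : ℝ) • z i := by
  rw [map_sum_rat_smul (seqMap_add z) (seqMap_smul z)]
  simp [seqMap, eV]

def seqSeminorm (z : ℕ → X) : SpaceP :=
  ⟨fun v => ‖seqMap z v‖, fun q v => by simp only [seqMap_smul, norm_smul, Real.norm_eq_abs],
    fun v w => by simpa [seqMap_add] using norm_add_le _ _⟩

lemma repIsometric_seqSeminorm {z : ℕ → X} (hz : DenseRange z) :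
    RepIsometric X (seqSeminorm z) := by
  refine ⟨seqMap z, seqMap_add z, seqMap_smul z, fun v => rfl, hz.mono ?_⟩
  rintro _ ⟨i, rfl⟩
  exact Submodule.subset_span ⟨eV i, by simp [seqMap, eV]⟩

lemma exists_pos_mul_sum_abs_le_norm_sum_smul {ι : Type*} [Fintype ι] {x : ι → X}
    (hx : LinearIndependent ℝ x) : ∃ c > 0, ∀ a : ι → ℝ, c * ∑ i, |a i| ≤ ‖∑ i, a i • x i‖ := by
  obtain ⟨K, -, hK⟩ := (Fintype.linearCombination ℝ x).injective_iff_antilipschitz.1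
    (linearIndependent_iff_injective_fintypeLinearCombination.1 hx)
  set n : ℝ := (Fintype.card ι : ℝ)
  refine ⟨(n * K + 1)⁻¹, by positivity, fun a => ?_⟩
  have hbound := ZeroHomClass.bound_of_antilipschitz _ hK a
  rw [Fintype.linearCombination_apply] at hbound
  have hsum : ∑ i, |a i| ≤ n * ‖a‖ := by
    calc ∑ i, |a i| ≤ ∑ _i : ι, ‖a‖ :=
          Finset.sum_le_sum fun i _ => Real.norm_eq_abs (a i) ▸ norm_le_pi_norm a i
      _ = n * ‖a‖ := by simp [n]
  have hn : 0 ≤ n := by positivity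
  rw [inv_mul_le_iff₀ (by positivity)]
  nlinarith [norm_nonneg (∑ i, a i • x i), mul_le_mul_of_nonneg_left hbound hn]

lemma seqSeminorm_mem_setB {z : ℕ → X} (hz : LinearIndependent ℝ z) : seqSeminorm z ∈ SetB := by
  intro n
  obtain ⟨c, hc, hcz⟩ := exists_pos_mul_sum_abs_le_norm_sum_smul
    (hz.comp (fun i : Fin n => (i : ℕ)) Fin.val_injective)
  exact ⟨c, hc, fun a => by simpa [seqSeminorm, seqMap_sum_smul_eV] using hcz (fun i => a i)⟩

end SeqSeminorm

theorem mem_closure_repIsometric_inter_setB {X : Type*} [NormedAddCommGroup X]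
    [NormedSpace ℝ X] [TopologicalSpace.SeparableSpace X] (hinf : ¬FiniteDimensional ℝ X)
    {ν : SpaceP} (hν : FinRepInX X ν) : ν ∈ closure {μ | RepIsometric X μ ∧ μ ∈ SetB} := by
  refine SpaceP.mem_closure_iff.2 fun I r hI hr => ?_
  obtain ⟨m, hm⟩ : ∃ m, ∀ v ∈ I, v.support ⊆ Finset.range m := by
    obtain ⟨M, hM⟩ := (hI.biUnion fun v _ => v.support.finite_toSet).bddAbove
    exact ⟨M + 1, fun v hv k hk =>
      Finset.mem_range.2 (Nat.lt_succ_of_le (hM (Set.mem_biUnion hv hk)))⟩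
  have hsmall : ∀ᶠ δ in 𝓝[>] (0 : ℝ), ∀ v ∈ I, δ * ν.1 v < r v / 2 :=
    (Filter.eventually_all_finite hI).2 fun v hv => nhdsWithin_le_nhds <|
      ((continuous_mul_const (ν.1 v)).tendsto' 0 0 (zero_mul _)).eventually
        (gt_mem_nhds (half_pos (hr v hv)))
  obtain ⟨δ, hδI, hδ⟩ := (hsmall.and self_mem_nhdsWithin).exists
  obtain ⟨x, hx⟩ := hν δ hδ m fun i => eV i
  have hcont : ∀ v : V, Continuous fun y : Fin m → X => ‖∑ i : Fin m, ((v i : ℚ) : ℝ) • y i‖ :=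
    fun v => by fun_prop
  obtain ⟨η, hη, hηI⟩ := Metric.eventually_nhds_iff.1 <| (Filter.eventually_all_finite hI).2
    fun v hv => ((hcont v).tendsto x).eventually (Metric.ball_mem_nhds _ (half_pos (hr v hv)))
  obtain ⟨z, hz_ind, hz_dense, hzx⟩ := exists_linearIndependent_denseRange_dist_lt hinf x hη
  refine ⟨seqSeminorm z, ⟨repIsometric_seqSeminorm hz_dense, seqSeminorm_mem_setB hz_ind⟩,
    fun v hv => ?_⟩
  have hsum := eq_sum_smul_eV (hm v hv)
  have h₁ := hηI ((dist_pi_lt_iff hη).2 hzx) v hv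
  have h₂ := hx fun i => v i
  rw [← hsum] at h₂
  replace h₂ := abs_sub_le_mul_of_le_and_le hδ.le (ν.nonneg v) h₂
  rw [Real.dist_eq] at h₁
  change |‖seqMap z v‖ - ν.1 v| < r v
  rw [hsum, seqMap_sum_smul_eV, ← hsum]
  calc _ ≤ _ := abs_sub_le _ (‖∑ i : Fin m, ((v i : ℚ) : ℝ) • x i‖) _
    _ < r v / 2 + r v / 2 := add_lt_add_of_lt_of_le h₁ (h₂.trans (hδI v hv).le)
    _ = r v := add_halves _

lemma setB_subset_setPinf : SetB ⊆ SetPinf :=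
  fun _ hμ n => ⟨fun i => eV i, hμ n⟩

theorem setOf_finRepInX_eq_closure {X : Type*} [NormedAddCommGroup X] [NormedSpace ℝ X]
    [TopologicalSpace.SeparableSpace X] (hinf : ¬FiniteDimensional ℝ X) {S : Set SpaceP}
    (hS : SetB ⊆ S) : {ν : ↥S | FinRepInX X ν.1} = closure {ν : ↥S | RepIsometric X ν.1} := by
  ext ν
  rw [Set.mem_ofPred_eq, closure_subtype]
  refine ⟨fun hν => closure_mono ?_ (mem_closure_repIsometric_inter_setB hinf hν),
    fun hν => finRepInX_of_mem_closure (closure_mono ?_ hν)⟩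
  · exact fun μ hμ => ⟨⟨μ, hS hμ.2⟩, hμ.1, rfl⟩
  · rintro _ ⟨μ, hμ, rfl⟩
    exact hμ

theorem statement2_general (X : Type*) [NormedAddCommGroup X] [NormedSpace ℝ X]
    [TopologicalSpace.SeparableSpace X] (hinf : ¬FiniteDimensional ℝ X) :
    ({ν : ↥SetB | FinRepInX X ν.1} = closure {ν : ↥SetB | RepIsometric X ν.1}) ∧
    ({ν : ↥SetPinf | FinRepInX X ν.1} = closure {ν : ↥SetPinf | RepIsometric X ν.1}) ∧
    ({ν : SpaceP | FinRepInX X ν} = closure {ν : SpaceP | RepIsometric X ν}) := by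
  refine ⟨setOf_finRepInX_eq_closure hinf subset_rfl,
    setOf_finRepInX_eq_closure hinf setB_subset_setPinf, ?_⟩
  ext ν
  exact ⟨fun hν => closure_mono (fun _ hμ => hμ.1)
    (mem_closure_repIsometric_inter_setB hinf hν), finRepInX_of_mem_closure⟩

/-- For a separable infinite-dimensional Banach space `X`, the set of
`ν ∈ ℬ` whose induced space is finitely representable in `X` is exactly the closure in `ℬ`
of the isometry class of `X`; likewise in `𝒫_∞` and in `𝒫`. -/
theorem statement2 (X : Type*) [NormedAddCommGroup X] [NormedSpace ℝ X] [CompleteSpace X]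
    [TopologicalSpace.SeparableSpace X] (hinf : ¬FiniteDimensional ℝ X) :
    ({ν : ↥SetB | FinRepInX X ν.1} = closure {ν : ↥SetB | RepIsometric X ν.1}) ∧
    ({ν : ↥SetPinf | FinRepInX X ν.1} = closure {ν : ↥SetPinf | RepIsometric X ν.1}) ∧
    ({ν : SpaceP | FinRepInX X ν} = closure {ν : SpaceP | RepIsometric X ν}) :=
  statement2_general X hinf
end
end

section
/- Let L be a compact metric space, let p ∈ [1,∞), and let (g_i)_{i∈ℕ} be a sequence in C(L,ℝ) whose linear span is dense in C(L,ℝ). For a Borel probability measure λ on L define σ(λ) ∈ 𝒫 by σ(λ)(r₁e₁+⋯+rₙeₙ) = (∫_L |r₁g₁+⋯+rₙgₙ|^p dλ)^{1/p} for all rational r₁,…,rₙ. Then σ is a continuous map from the space of Borel probability measures on L, equipped with the topology of weak convergence (generated by integration of continuous functions), to 𝒫; and for every λ the seminorm σ(λ) represents the Banach space L_p(λ) isometrically. -/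
open Filter Topology

noncomputable section

/-!
For a continuous `f = ∑ rᵢ gᵢ` the number `σ(λ)(∑ rᵢ eᵢ)` is the norm of the class of `f` in
`L_p(λ)`, so `σ(λ)` is the pullback of the `L_p(λ)`-norm along a ℚ-linear map `V → L_p(λ)`. Its
range spans a dense subspace because the span of the `gᵢ` is dense in `C(L, ℝ)`, which is itself
dense in `L_p(λ)` (`λ` is a finite, hence weakly regular, measure on a compact metric space).
Continuity of `σ` is checked coordinatewise: `λ ↦ ∫ |f|^p dλ` is continuous for the weak topology
because `|f|^p` is a bounded continuous function on the compact space `L`.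
-/

open MeasureTheory

section NormPullback

variable {X : Type*} [NormedAddCommGroup X] [NormedSpace ℝ X] [Module ℚ X]

lemma isQSeminorm_norm_comp (T : V →ₗ[ℚ] X) : IsQSeminorm fun v => ‖T v‖ := by
  refine ⟨fun q v => ?_, fun v w => ?_⟩
  · show ‖T (q • v)‖ = _
    rw [map_smul, ← Rat.cast_smul_eq_qsmul ℝ, norm_smul, Real.norm_eq_abs]
  · show ‖T (v + w)‖ ≤ _
    rw [map_add]
    exact norm_add_le _ _

def SpaceP.ofLinearMap (T : V →ₗ[ℚ] X) : SpaceP :=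
  ⟨fun v => ‖T v‖, isQSeminorm_norm_comp T⟩

lemma repIsometric_ofLinearMap (T : V →ₗ[ℚ] X)
    (hT : Dense (Submodule.span ℝ (Set.range T) : Set X)) :
    RepIsometric X (SpaceP.ofLinearMap T) :=
  ⟨T, map_add T, fun q v => by rw [map_smul, Rat.cast_smul_eq_qsmul], fun _ => rfl, hT⟩

end NormPullback

lemma Dense.span_image_of_denseRange {E F : Type*} [TopologicalSpace E] [AddCommGroup E]
    [Module ℝ E] [TopologicalSpace F] [AddCommGroup F] [Module ℝ F] {s : Set E}
    (hs : Dense (Submodule.span ℝ s : Set E)) (A : E →L[ℝ] F) (hA : DenseRange A) :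
    Dense (Submodule.span ℝ (A '' s) : Set F) := by
  show Dense (Submodule.span ℝ ((A : E →ₗ[ℝ] F) '' s) : Set F)
  rw [← Submodule.map_span]
  exact hA.dense_image A.continuous hs

section ContinuousFunctions

variable {L : Type*} [TopologicalSpace L]

lemma linearCombination_apply_eq_sum (g : ℕ → C(L, ℝ)) (v : V) (t : L) :
    Finsupp.linearCombination ℚ g v t = ∑ i ∈ v.support, (v i : ℝ) * g i t := by
  simp [Finsupp.linearCombination_apply, Finsupp.sum, Rat.smul_def]

variable [CompactSpace L] [MeasurableSpace L]

lemma continuous_integral_rpow_abs [OpensMeasurableSpace L] {p : ℝ} (hp : 0 ≤ p)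
    (f : C(L, ℝ)) :
    Continuous fun ν : ProbabilityMeasure L => (∫ t, |f t| ^ p ∂(ν : Measure L)) ^ (1 / p) := by
  have hf : Continuous fun t => |f t| ^ p := f.continuous.abs.rpow_const fun _ => Or.inr hp
  exact (ProbabilityMeasure.continuous_integral_boundedContinuousFunction
    (BoundedContinuousFunction.mkOfCompact ⟨_, hf⟩)).rpow_const fun _ => Or.inr (by positivity)

variable [BorelSpace L] (μ : Measure L) [IsFiniteMeasure μ] {p : ℝ} [Fact (1 ≤ ENNReal.ofReal p)]

lemma norm_toLp_eq_integral_rpow_abs (𝕜 : Type*) [NormedRing 𝕜] [Module 𝕜 ℝ]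
    [IsBoundedSMul 𝕜 ℝ] (f : C(L, ℝ)) :
    ‖ContinuousMap.toLp (ENNReal.ofReal p) μ 𝕜 f‖ = (∫ t, |f t| ^ p ∂μ) ^ (1 / p) := by
  have hp : 0 < p := one_pos.trans_le (ENNReal.one_le_ofReal.mp Fact.out)
  have hae := ContinuousMap.coeFn_toLp (𝕜 := 𝕜) (p := ENNReal.ofReal p) μ f
  have hmem : MemLp f (ENNReal.ofReal p) μ := (memLp_congr_ae hae).mp (Lp.memLp _)
  rw [Lp.norm_def, eLpNorm_congr_ae hae,
    hmem.eLpNorm_eq_integral_rpow_norm (by simpa using hp) ENNReal.ofReal_ne_top,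
    ENNReal.toReal_ofReal (by positivity), ENNReal.toReal_ofReal hp.le]
  simp only [Real.norm_eq_abs, one_div]

end ContinuousFunctions

theorem statement3_general (L : Type*) [MetricSpace L] [CompactSpace L]
    [MeasurableSpace L] [BorelSpace L]
    (p : ℝ) [Fact (1 ≤ ENNReal.ofReal p)]
    (g : ℕ → C(L, ℝ))
    (hg : Dense (Submodule.span ℝ (Set.range g) : Set C(L, ℝ))) :
    ∃ σ : MeasureTheory.ProbabilityMeasure L → SpaceP,
      (∀ (ν : MeasureTheory.ProbabilityMeasure L) (v : V),
        (σ ν).1 v =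
          (∫ t, |∑ i ∈ v.support, (v i : ℝ) * g i t| ^ p
              ∂(ν : MeasureTheory.Measure L)) ^ (1 / p)) ∧
      Continuous σ ∧
      ∀ ν : MeasureTheory.ProbabilityMeasure L,
        RepIsometric
          (MeasureTheory.Lp ℝ (ENNReal.ofReal p) (ν : MeasureTheory.Measure L)) (σ ν) := by
  let T (ν : ProbabilityMeasure L) : V →ₗ[ℚ] Lp ℝ (ENNReal.ofReal p) (ν : Measure L) :=
    (ContinuousMap.toLp (ENNReal.ofReal p) (ν : Measure L) ℚ).toLinearMap ∘ₗ
      Finsupp.linearCombination ℚ g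
  have hσ (ν : ProbabilityMeasure L) (v : V) :
      (SpaceP.ofLinearMap (T ν)).1 v =
        (∫ t, |Finsupp.linearCombination ℚ g v t| ^ p ∂(ν : Measure L)) ^ (1 / p) :=
    norm_toLp_eq_integral_rpow_abs _ ℚ _
  refine ⟨fun ν => SpaceP.ofLinearMap (T ν), fun ν v => ?_, ?_, fun ν => ?_⟩
  · simp only [hσ, linearCombination_apply_eq_sum]
  · have hp : 0 ≤ p := zero_le_one.trans (ENNReal.one_le_ofReal.mp Fact.out)
    refine Continuous.subtype_mk (continuous_pi fun v => ?_) _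
    exact (continuous_integral_rpow_abs hp _).congr fun ν => (hσ ν v).symm
  · refine repIsometric_ofLinearMap _ ((hg.span_image_of_denseRange _
      (ContinuousMap.toLp_denseRange ℝ _ ℝ ENNReal.ofReal_ne_top)).mono
      (Submodule.span_mono ?_))
    rintro - ⟨-, ⟨i, rfl⟩, rfl⟩
    refine ⟨Finsupp.single i 1, ?_⟩
    simp only [T, LinearMap.comp_apply, ContinuousLinearMap.coe_coe,
      Finsupp.linearCombination_single, one_smul]
    -- `toLp` over `ℚ` and over `ℝ` are the same map on elements
    rfl

/-- For a compact metric space `L`, `p ∈ [1,∞)` and a sequence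
`(gᵢ)` in `C(L,ℝ)` with dense linear span, the map `σ` sending a Borel probability
measure `λ` on `L` to the pseudonorm `σ(λ)(∑ rᵢ eᵢ) = (∫ |∑ rᵢ gᵢ|^p dλ)^{1/p}` is a
continuous map from probability measures (weak topology) to `𝒫`, and `σ(λ)` represents
`L_p(λ)` isometrically. -/
theorem statement3 (L : Type*) [MetricSpace L] [CompactSpace L]
    [MeasurableSpace L] [BorelSpace L]
    (p : ℝ) (hp : 1 ≤ p) [Fact (1 ≤ ENNReal.ofReal p)]
    (g : ℕ → C(L, ℝ))
    (hg : Dense (Submodule.span ℝ (Set.range g) : Set C(L, ℝ))) :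
    ∃ σ : MeasureTheory.ProbabilityMeasure L → SpaceP,
      (∀ (ν : MeasureTheory.ProbabilityMeasure L) (v : V),
        (σ ν).1 v =
          (∫ t, |∑ i ∈ v.support, (v i : ℝ) * g i t| ^ p
              ∂(ν : MeasureTheory.Measure L)) ^ (1 / p)) ∧
      Continuous σ ∧
      ∀ ν : MeasureTheory.ProbabilityMeasure L,
        RepIsometric
          (MeasureTheory.Lp ℝ (ENNReal.ofReal p) (ν : MeasureTheory.Measure L)) (σ ν) :=
  statement3_general L p g hg
end
end
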